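/- Let n ≥ 1, Q, Q̃ ∈ [0,1], and let E_{a,b,c} be Eve's (unnormalized) states of the depolarizing-channel dilation. Then the overlap of the two states corresponding to the two key values satisfies ⟨E_{0,0⃗,0⃗}, E_{1,1⃗,1⃗}⟩ = (1−Q)(1−Q̃)/2. -/

import Mathlib

/-!
The last two qubits of Eve's register flag which errors occurred. In the no-error branch
(flags `00`) Eve holds the same vector `(Σ_i |i i⟩) ⊗ (Σ_k |k k⟩)` whatever the key, with
coefficient `2^{-(2n+1)/2} √((1-Q)(1-Q̃))`; every other branch keeps a copy of the string `b`
in the second or third register. For `b = 0⃗` and `b = 1⃗` these error branches therefore live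
on disjoint sets of basis vectors, disjoint also from the no-error branch, so only the no-error
branch contributes to the overlap: `2^{-(2n+1)} (1-Q)(1-Q̃) · 2^{2n}`.
-/

open scoped BigOperators

/-- The index type for `ℂ^{2^n} ⊗ ℂ^{2^n} ⊗ ℂ^{2^n} ⊗ ℂ^{2^n} ⊗ ℂ² ⊗ ℂ²`. -/
abbrev EveIdx (n : ℕ) :=
  (Fin n → Bool) × (Fin n → Bool) × (Fin n → Bool) × (Fin n → Bool) × Bool × Bool

/-- The constant bit string `a⃗ = (a,…,a) ∈ {0,1}^n`. -/
def constStr (n : ℕ) (a : Bool) : Fin n → Bool := fun _ => a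

instance eveIdxDecEq (n : ℕ) : DecidableEq (EveIdx n) := instDecidableEqProd

/-- Eve's (unnormalized) state `E_{a,b,c}` of the depolarizing-channel dilation:
`E_{a,b,c} = 2^{−(2n+1)/2} [ δ_{b,a⃗} δ_{c,b} √((1−Q)(1−Q̃)) (Σ_i |i i⟩)⊗(Σ_k |k k⟩)⊗|0 0⟩
 + δ_{c,b} √(Q(1−Q̃)) |a⃗ b⟩⊗(Σ_k |k k⟩)⊗|1 0⟩
 + δ_{b,a⃗} √((1−Q)Q̃) (Σ_i |i i⟩)⊗|b c⟩⊗|0 1⟩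
 + √(Q Q̃) |a⃗ b⟩⊗|b c⟩⊗|1 1⟩ ]`. -/
noncomputable def eveVec (n : ℕ) (Q Qt : ℝ) (a : Bool) (b c : Fin n → Bool) :
    EuclideanSpace ℂ (EveIdx n) :=
  ((Real.sqrt (2 ^ (2 * n + 1)) : ℝ) : ℂ)⁻¹ •
    ((if b = constStr n a ∧ c = b then ((Real.sqrt ((1 - Q) * (1 - Qt)) : ℝ) : ℂ) else 0) •
        (∑ i : Fin n → Bool, ∑ k : Fin n → Bool,
          EuclideanSpace.single (i, i, k, k, false, false) (1 : ℂ)) +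
      (if c = b then ((Real.sqrt (Q * (1 - Qt)) : ℝ) : ℂ) else 0) •
        (∑ k : Fin n → Bool,
          EuclideanSpace.single (constStr n a, b, k, k, true, false) (1 : ℂ)) +
      (if b = constStr n a then ((Real.sqrt ((1 - Q) * Qt) : ℝ) : ℂ) else 0) •
        (∑ i : Fin n → Bool,
          EuclideanSpace.single (i, i, b, c, false, true) (1 : ℂ)) +
      ((Real.sqrt (Q * Qt) : ℝ) : ℂ) •
        EuclideanSpace.single (constStr n a, b, b, c, true, true) (1 : ℂ))

open scoped InnerProductSpace

namespace EuclideanSpace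

variable {𝕜 ι : Type*} [RCLike 𝕜]

def supportedOn (S : Set ι) : Submodule 𝕜 (EuclideanSpace 𝕜 ι) where
  carrier := {x | ∀ j ∉ S, x j = 0}
  add_mem' hx hy j hj := by simp [hx j hj, hy j hj]
  zero_mem' _ _ := rfl
  smul_mem' c x hx j hj := by simp [hx j hj]

theorem single_mem_supportedOn [DecidableEq ι] {S : Set ι} {j : ι} (hj : j ∈ S) (c : 𝕜) :
    single j c ∈ supportedOn S := fun i hi => by
  rw [PiLp.single_apply, if_neg (ne_of_mem_of_not_mem hj hi).symm]

theorem inner_eq_zero_of_mem_supportedOn [Fintype ι] {S T : Set ι} (hST : Disjoint S T)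
    {x y : EuclideanSpace 𝕜 ι} (hx : x ∈ supportedOn S) (hy : y ∈ supportedOn T) :
    ⟪x, y⟫_𝕜 = 0 := by
  rw [PiLp.inner_apply]
  refine Finset.sum_eq_zero fun j _ => ?_
  by_cases hj : j ∈ S
  · simp [hy j (hST.notMem_of_mem_left hj)]
  · simp [hx j hj]

theorem inner_eq_inner_of_sub_mem_supportedOn [Fintype ι] {S T U : Set ι} (hST : Disjoint S T)
    (hSU : Disjoint S U) (hTU : Disjoint T U) {x x' u u' : EuclideanSpace 𝕜 ι}
    (hu : u ∈ supportedOn S) (hu' : u' ∈ supportedOn S)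
    (hx : x - u ∈ supportedOn T) (hx' : x' - u' ∈ supportedOn U) :
    ⟪x, x'⟫_𝕜 = ⟪u, u'⟫_𝕜 := by
  rw [← add_sub_cancel u x, ← add_sub_cancel u' x', inner_add_left, inner_add_right,
    inner_add_right, inner_eq_zero_of_mem_supportedOn hSU hu hx',
    inner_eq_zero_of_mem_supportedOn hST.symm hx hu', inner_eq_zero_of_mem_supportedOn hTU hx hx',
    add_zero, add_zero, add_zero]

theorem inner_sum_single_self [Fintype ι] [DecidableEq ι] {α : Type*} [Fintype α] {f : α → ι}
    (hf : Function.Injective f) :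
    ⟪∑ a, single (f a) (1 : 𝕜), ∑ a, single (f a) (1 : 𝕜)⟫_𝕜 = Fintype.card α := by
  classical
  simp only [inner_sum, sum_inner, inner_single_left, PiLp.single_apply, map_one, one_mul]
  simp [hf.eq_iff]

end EuclideanSpace

open EuclideanSpace

theorem constStr_false_ne_true {n : ℕ} (hn : 1 ≤ n) : constStr n false ≠ constStr n true :=
  fun h => Bool.false_ne_true (congrFun h ⟨0, hn⟩)

def noErrorIdx (n : ℕ) : Set (EveIdx n) := {j | j.2.2.2.2 = (false, false)}

def errorRecordIdx (n : ℕ) (b : Fin n → Bool) : Set (EveIdx n) :=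
  {j | (j.2.2.2.2.1 = true ∧ j.2.1 = b) ∨ (j.2.2.2.2 = (false, true) ∧ j.2.2.1 = b)}

theorem disjoint_noErrorIdx_errorRecordIdx (n : ℕ) (b : Fin n → Bool) :
    Disjoint (noErrorIdx n) (errorRecordIdx n b) := by
  rw [Set.disjoint_left]
  rintro ⟨_, _, _, _, s, t⟩ (hst : (s, t) = _) (h | h) <;> simp_all

theorem disjoint_errorRecordIdx {n : ℕ} {b b' : Fin n → Bool} (hb : b ≠ b') :
    Disjoint (errorRecordIdx n b) (errorRecordIdx n b') := by
  rw [Set.disjoint_left]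
  rintro ⟨_, _, _, _, s, t⟩ (h | h) (h' | h') <;> simp_all

noncomputable def diagVec (n : ℕ) : EuclideanSpace ℂ (EveIdx n) :=
  ∑ i : Fin n → Bool, ∑ k : Fin n → Bool, single (i, i, k, k, false, false) (1 : ℂ)

theorem diagVec_mem_supportedOn (n : ℕ) : diagVec n ∈ supportedOn (noErrorIdx n) :=
  Submodule.sum_mem _ fun _ _ => Submodule.sum_mem _ fun _ _ =>
    single_mem_supportedOn (show _ ∈ noErrorIdx n from rfl) _

theorem inner_diagVec_self (n : ℕ) : ⟪diagVec n, diagVec n⟫_ℂ = 2 ^ (2 * n) := by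
  have hf : Function.Injective fun p : (Fin n → Bool) × (Fin n → Bool) =>
      ((p.1, p.1, p.2, p.2, false, false) : EveIdx n) := fun p q h => by
    simp_all [Prod.ext_iff]
  rw [diagVec, ← Fintype.sum_prod_type', inner_sum_single_self hf]
  simp [pow_mul', sq]

theorem eveVec_sub_mem_supportedOn (n : ℕ) (Q Qt : ℝ) (a : Bool) (b c : Fin n → Bool) :
    eveVec n Q Qt a b c - (((Real.sqrt (2 ^ (2 * n + 1)) : ℝ) : ℂ)⁻¹ *
        if b = constStr n a ∧ c = b then ((Real.sqrt ((1 - Q) * (1 - Qt)) : ℝ) : ℂ) else 0) •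
      diagVec n ∈ supportedOn (errorRecordIdx n b) := by
  rw [eveVec, diagVec, mul_smul, smul_add, smul_add, smul_add, add_assoc, add_assoc,
    add_sub_cancel_left, ← smul_add, ← smul_add]
  have hmem {j : EveIdx n} (hj : j ∈ errorRecordIdx n b) :
      single j (1 : ℂ) ∈ supportedOn (errorRecordIdx n b) :=
    single_mem_supportedOn hj 1
  refine Submodule.smul_mem _ _ (add_mem ?_ (add_mem ?_ ?_)) <;> refine Submodule.smul_mem _ _ ?_
  · exact Submodule.sum_mem _ fun _ _ => hmem (Or.inl ⟨rfl, rfl⟩)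
  · exact Submodule.sum_mem _ fun _ _ => hmem (Or.inr ⟨rfl, rfl⟩)
  · exact hmem (Or.inl ⟨rfl, rfl⟩)

theorem eveVec_overlap_general (n : ℕ) (hn : 1 ≤ n) (Q Qt : ℝ)
    (hQ1 : Q ≤ 1) (hQt1 : Qt ≤ 1) :
    (inner ℂ (eveVec n Q Qt false (constStr n false) (constStr n false))
        (eveVec n Q Qt true (constStr n true) (constStr n true)) : ℂ) =
      (((1 - Q) * (1 - Qt) / 2 : ℝ) : ℂ) := by
  set k : ℂ :=
    ((Real.sqrt (2 ^ (2 * n + 1)) : ℝ) : ℂ)⁻¹ * ((Real.sqrt ((1 - Q) * (1 - Qt)) : ℝ) : ℂ)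
  have h0 := eveVec_sub_mem_supportedOn n Q Qt false (constStr n false) (constStr n false)
  have h1 := eveVec_sub_mem_supportedOn n Q Qt true (constStr n true) (constStr n true)
  rw [if_pos ⟨rfl, rfl⟩] at h0 h1
  have hk := Submodule.smul_mem _ k (diagVec_mem_supportedOn n)
  rw [inner_eq_inner_of_sub_mem_supportedOn (disjoint_noErrorIdx_errorRecordIdx n _)
      (disjoint_noErrorIdx_errorRecordIdx n _) (disjoint_errorRecordIdx (constStr_false_ne_true hn))
      hk hk h0 h1, inner_smul_left, inner_smul_right, inner_diagVec_self]
  have hp : 0 ≤ (1 - Q) * (1 - Qt) := mul_nonneg (sub_nonneg.2 hQ1) (sub_nonneg.2 hQt1)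
  simp only [k, map_mul, map_inv₀, Complex.conj_ofReal]
  rw [← mul_assoc, ← sq, mul_pow, inv_pow]
  norm_cast
  rw [Real.sq_sqrt hp, Real.sq_sqrt (by positivity)]
  push_cast
  field_simp
  ring

/-- Overlap of the two Eve states corresponding to the two key values:
`⟨E_{0,0⃗,0⃗}, E_{1,1⃗,1⃗}⟩ = (1−Q)(1−Q̃)/2`. -/
theorem eveVec_overlap (n : ℕ) (hn : 1 ≤ n) (Q Qt : ℝ)
    (hQ0 : 0 ≤ Q) (hQ1 : Q ≤ 1) (hQt0 : 0 ≤ Qt) (hQt1 : Qt ≤ 1) :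
    (inner ℂ (eveVec n Q Qt false (constStr n false) (constStr n false))
        (eveVec n Q Qt true (constStr n true) (constStr n true)) : ℂ) =
      (((1 - Q) * (1 - Qt) / 2 : ℝ) : ℂ) :=
  eveVec_overlap_general n hn Q Qt hQ1 hQt1
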